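/- arXiv:2510.19417 — 4 statements merged into one kernel-verified Lean document; each statement's English description precedes it below -/
import Mathlib

section
/- Let q be a prime power, let Θ(t) = t^{-1} Σ_{i=0}^∞ s_i t^{-i} ∈ F_q((t^{-1})) be irrational with coefficient sequence S = (s_i)_{i≥0}, and let k ≥ 0. Write ⟨t^k·Θ(t)⟩ = [0; A_1^{[Θ·t^k]}, A_2^{[Θ·t^k]}, ...]. Then for every m ≥ 0, the number-wall entry W̃[m,k] is nonzero if and only if m + 1 = Σ_{i=1}^{j} deg A_i^{[Θ·t^k]} for some j ≥ 1; consequently the k-th diagonal of the number wall of S consists of successive blocks of deg A_i^{[Θ·t^k]} − 1 zero entries separated by single nonzero entries. -/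
open scoped Classical
open Filter Polynomial

noncomputable section

namespace EscapeOfMass

variable {K : Type*} [Field K]

/-- The element `t` of `K((t⁻¹))`, modelled as the Laurent series field `K⸨X⸩`
in the variable `X = t⁻¹`; thus `t = X⁻¹ = single (-1) 1`. -/
def tLS (K : Type*) [Field K] : LaurentSeries K := HahnSeries.single (-1 : ℤ) 1

/-- The polynomial part of a Laurent series in `K((t⁻¹))` (the terms with
non-negative powers of `t`, i.e. non-positive powers of `X`). -/
def polyPart (f : LaurentSeries K) : LaurentSeries K :=
  { coeff := fun n => if n ≤ 0 then f.coeff n else 0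
    isPWO_support' := by
      refine f.isPWO_support'.mono fun n hn => ?_
      simp only [Function.mem_support, ne_eq] at hn ⊢
      intro h
      exact hn (by simp [h]) }

/-- The fractional part `⟨f⟩` of a Laurent series in `K((t⁻¹))`. -/
def fracPart (f : LaurentSeries K) : LaurentSeries K := f - polyPart f

/-- The complete quotients of the continued fraction expansion of `f`. -/
def cfQuot (f : LaurentSeries K) : ℕ → LaurentSeries K
  | 0 => f
  | i + 1 => (cfQuot f i - polyPart (cfQuot f i))⁻¹

/-- The partial quotients `A_i` of the continued fraction expansion of `f`. -/
def cfPQ (f : LaurentSeries K) (i : ℕ) : LaurentSeries K := polyPart (cfQuot f i)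

/-- The degree (as an integer) of a Laurent series viewed in `K((t⁻¹))`:
for a nonzero polynomial in `t` this is the usual degree. -/
def degZ (f : LaurentSeries K) : ℤ := -f.order

/-- `f` is a rational Laurent series, i.e. lies in `K(t)`. -/
def IsRatLS (f : LaurentSeries K) : Prop := ∃ r : RatFunc K, (r : LaurentSeries K) = f

/-- `f` is a quadratic irrational: it is irrational and a root of a quadratic
polynomial with coefficients in `K[t]`. -/
def IsQuadIrr (f : LaurentSeries K) : Prop :=
  ¬ IsRatLS f ∧ ∃ a b c : Polynomial K, a ≠ 0 ∧
    Polynomial.aeval (tLS K) a * f ^ 2 + Polynomial.aeval (tLS K) b * f +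
      Polynomial.aeval (tLS K) c = 0

/-- `(m, ℓ)` is a window for the periodic part of the continued fraction of `f`:
the partial quotients are periodic with period `ℓ ≥ 1` from index `m + 1` on. -/
def PeriodWindow (f : LaurentSeries K) (m ℓ : ℕ) : Prop :=
  1 ≤ ℓ ∧ ∀ i : ℕ, m + 1 ≤ i → cfPQ f (i + ℓ) = cfPQ f i

/-- The `n`-escape of mass of the continued fraction expansion of `f`: the proportion,
within one period of the periodic part of the partial quotients of `f`, of the sum
`∑ max (deg A_i - n) 0` relative to `∑ deg A_i`. -/
def eMassOf (f : LaurentSeries K) (n : ℕ) : ℝ :=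
  if h : ∃ s : ℕ × ℕ, PeriodWindow f s.1 s.2 then
    (∑ i ∈ Finset.Ico ((Classical.choose h).1 + 1)
        ((Classical.choose h).1 + 1 + (Classical.choose h).2),
        max ((degZ (cfPQ f i) : ℝ) - n) 0) /
    (∑ i ∈ Finset.Ico ((Classical.choose h).1 + 1)
        ((Classical.choose h).1 + 1 + (Classical.choose h).2),
        (degZ (cfPQ f i) : ℝ))
  else 0

/-- The `n`-escape of mass in the `k`-th diagonal of `f` with respect to the
sequence `{g^k}`. -/
def eMassP (g f : LaurentSeries K) (k n : ℕ) : ℝ := eMassOf (g ^ k * f) n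

/-- The `n`-escape of mass in the `k`-th diagonal of `f` with respect to `{t^k}`. -/
def eMass (f : LaurentSeries K) (k n : ℕ) : ℝ := eMassP (tLS K) f k n

/-- `f` exhibits `c` escape of mass with respect to the sequence `{g^k}`. -/
def ExhibitsEscape (g f : LaurentSeries K) (c : ℝ) : Prop :=
  ∃ L : ℝ, Tendsto (fun n : ℕ => Filter.liminf (fun k : ℕ => eMassP g f k n) atTop)
    atTop (nhds L) ∧ c ≤ L

/-- `f` exhibits exactly `c` escape of mass with respect to the sequence `{g^k}`. -/
def ExhibitsExactEscape (g f : LaurentSeries K) (c : ℝ) : Prop :=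
  Tendsto (fun n : ℕ => Filter.liminf (fun k : ℕ => eMassP g f k n) atTop)
    atTop (nhds c)

/-- `f` exhibits full (`c = 1`) maximal escape of mass with respect to `{g^k}`. -/
def ExhibitsFullMaxEscape (g f : LaurentSeries K) : Prop :=
  Tendsto (fun n : ℕ => Filter.limsup (fun k : ℕ => eMassP g f k n) atTop)
    atTop (nhds 1)

/-- `A ⊆ ℕ` has natural density `c`. -/
def HasDensity (A : Set ℕ) (c : ℝ) : Prop :=
  Tendsto (fun M : ℕ => (((Finset.Icc 1 M).filter fun k => k ∈ A).card : ℝ) / M)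
    atTop (nhds c)

/-- `f` exhibits full generic escape of mass with respect to `{t^k}`. -/
def FullGenericEscape (f : LaurentSeries K) : Prop :=
  ∀ ε : ℝ, 0 < ε → ∃ dens : ℕ → ℝ,
    (∀ n : ℕ, HasDensity {k : ℕ | 1 - ε < eMass f k n} (dens n)) ∧
    Tendsto dens atTop (nhds 1)

/-- Substitution `t ↦ P(t)` on Laurent series: for `f = ∑_{i ≥ d} a_i t^{-i}` (with
`d = f.order` in the variable `X = t⁻¹`), `substLS f P = ∑_{i ≥ d} a_i P(t)^{-i}`. -/
def substLS (f : LaurentSeries K) (P : Polynomial K) : LaurentSeries K :=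
  (Polynomial.aeval (tLS K) P)⁻¹ ^ f.order *
    HahnSeries.ofPowerSeries ℤ K
      (PowerSeries.mk fun n =>
        ∑ j ∈ Finset.range (n + 1),
          f.coeff (f.order + j) * (((Polynomial.aeval (tLS K) P)⁻¹ ^ j).coeff (n : ℤ)))

/-- The `p`-Cantor sequence over `ZMod p`. -/
def cantor (p : ℕ) : ℕ → ZMod p
  | 0 => 1
  | (n + 1) =>
    if hp : 1 < p then
      if (n + 1) % p % 2 = 1 then 0
      else (((p - 1) / 2).choose (((n + 1) % p) / 2) : ZMod p) * cantor p ((n + 1) / p)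
    else 0
  decreasing_by exact Nat.div_lt_self (Nat.succ_pos _) hp

/-- `Θ̃_p = ∑_{i ≥ 0} c_i^{(p)} t^{-i}`. -/
def cantorTilde (p : ℕ) : LaurentSeries (ZMod p) :=
  HahnSeries.ofPowerSeries ℤ (ZMod p) (PowerSeries.mk fun i => cantor p i)

/-- `Θ_p = t⁻¹ ∑_{i ≥ 0} c_i^{(p)} t^{-i}`. -/
def cantorTheta (p : ℕ) : LaurentSeries (ZMod p) :=
  HahnSeries.single (1 : ℤ) 1 * cantorTilde p

/-- The Thue–Morse sequence over `ZMod 2`. -/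
def thueMorse (n : ℕ) : ZMod 2 := ((Nat.digits 2 n).sum : ZMod 2)

/-- The Thue–Morse Laurent series `τ = ∑_{n ≥ 1} τ_n t^{-n}`. -/
def tmSeries : LaurentSeries (ZMod 2) :=
  HahnSeries.ofPowerSeries ℤ (ZMod 2) (PowerSeries.mk fun n => thueMorse n)

/-- The extension of a one-sided sequence to `ℤ` by zero. -/
def extendSeq (S : ℕ → K) : ℤ → K := fun i => if 0 ≤ i then S i.toNat else 0

/-- The entry `W(S)[m, n]` of the number wall of the (doubly infinite) sequence `s`:
the determinant of the `(m+1) × (m+1)` Toeplitz matrix `(s_{n - i + j})`. -/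
def wallEntry (s : ℤ → K) (m : ℕ) (n : ℤ) : K :=
  (Matrix.of fun i j : Fin (m + 1) => s (n - (i : ℕ) + (j : ℕ))).det

/-- The Laurent series `t⁻¹ ∑_{i ≥ 0} s_i t^{-i}` associated to a sequence. -/
def seriesOf (S : ℕ → K) : LaurentSeries K :=
  HahnSeries.single (1 : ℤ) 1 * HahnSeries.ofPowerSeries ℤ K (PowerSeries.mk S)

/-- The coefficient sequence of `Θ = t⁻¹ ∑ s_i t^{-i}`, extended to `ℤ` by zero. -/
def coeffSeq (f : LaurentSeries K) : ℤ → K := fun i => if 0 ≤ i then f.coeff (i + 1) else 0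

/-- The absolute value of a Laurent series in `F_q((t⁻¹))`: `|f| = q^{deg f}`. -/
def absLS {K : Type*} [Field K] [Fintype K] (f : LaurentSeries K) : ℝ :=
  if f = 0 then 0 else (Fintype.card K : ℝ) ^ (-f.order)

/-!
Reversing its rows turns `W̃[m, k]` into the Hankel determinant `det (s_{k+i+j})_{0 ≤ i, j ≤ m}`,
the coefficients of `Θ = ⟨t^k Θ(t)⟩`. It vanishes iff some nonzero `q` of degree `≤ m` kills the
coefficients of `t⁻¹, …, t^{-(m+1)}` in `qΘ`, i.e. `|⟨qΘ⟩| < |t|^{-(m+1)}`. The convergent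
denominators `q_j`, of degree `∑_{i ≤ j} deg A_i`, satisfy `|q_j Θ - p_j| = |q_{j+1}|⁻¹`, and by
best approximation no `q` with `deg q < deg q_j` reaches `|⟨qΘ⟩| < |q_j|⁻¹`. So such a `q` exists
iff `m + 1` is not one of the degrees `deg q_j`.
-/

lemma tLS_pow (j : ℕ) : tLS K ^ j = HahnSeries.single (-(j : ℤ)) 1 := by
  rw [tLS, HahnSeries.single_pow, one_pow, nsmul_eq_mul, mul_neg_one]

lemma algebraMap_mul_tLS_pow (c : K) (j : ℕ) :
    algebraMap K (LaurentSeries K) c * tLS K ^ j = HahnSeries.single (-(j : ℤ)) c := by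
  rw [tLS_pow, HahnSeries.algebraMap_apply', PowerSeries.algebraMap_eq,
    HahnSeries.ofPowerSeries_C, HahnSeries.C_apply, HahnSeries.single_mul_single, zero_add, mul_one]

lemma coeff_mul_aeval_tLS (g : LaurentSeries K) {q : K[X]} {N : ℕ} (hN : q.natDegree < N)
    (z : ℤ) :
    (g * aeval (tLS K) q).coeff z = ∑ j ∈ Finset.range N, q.coeff j * g.coeff (z + j) := by
  rw [aeval_def, eval₂_eq_sum_range' _ hN, Finset.mul_sum, HahnSeries.coeff_sum]
  refine Finset.sum_congr rfl fun j _ => ?_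
  rw [algebraMap_mul_tLS_pow, show z = z + j + -(j : ℤ) by ring, HahnSeries.coeff_mul_single_add,
    add_neg_cancel_right, mul_comm]

lemma coeff_mul_aeval_tLS_eq_zero {g : LaurentSeries K} {N : ℤ} (hg : ∀ z ≤ N, g.coeff z = 0)
    (q : K[X]) {z : ℤ} (hz : z + q.natDegree ≤ N) : (g * aeval (tLS K) q).coeff z = 0 := by
  rw [coeff_mul_aeval_tLS g (Nat.lt_succ_self _)]
  refine Finset.sum_eq_zero fun j hj => ?_
  rw [hg _ (by simp only [Finset.mem_range] at hj; omega), mul_zero]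

lemma coeff_aeval_tLS_neg (q : K[X]) (n : ℕ) : (aeval (tLS K) q).coeff (-n) = q.coeff n := by
  rw [← one_mul (aeval (tLS K) q),
    coeff_mul_aeval_tLS 1 (by omega : q.natDegree < q.natDegree + n + 1),
    Finset.sum_eq_single n (fun j _ hj => by rw [HahnSeries.coeff_one, if_neg (by omega), mul_zero])
      (fun h => absurd (Finset.mem_range.mpr (by omega)) h)]
  simp

lemma coeff_aeval_tLS_of_pos (q : K[X]) {z : ℤ} (hz : 0 < z) : (aeval (tLS K) q).coeff z = 0 := by
  rw [← one_mul (aeval (tLS K) q), coeff_mul_aeval_tLS 1 (Nat.lt_succ_self _)]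
  exact Finset.sum_eq_zero fun j _ => by rw [HahnSeries.coeff_one, if_neg (by omega), mul_zero]

lemma order_aeval_tLS {q : K[X]} (hq : q ≠ 0) : (aeval (tLS K) q).order = -q.natDegree := by
  have hlead : (aeval (tLS K) q).coeff (-q.natDegree) ≠ 0 := by
    rwa [coeff_aeval_tLS_neg, coeff_natDegree, leadingCoeff_ne_zero]
  refine le_antisymm (HahnSeries.order_le_of_coeff_ne_zero hlead)
    ((HahnSeries.le_order_iff_forall (HahnSeries.ne_zero_of_coeff_ne_zero hlead)).mpr
      fun z hz => ?_)
  obtain ⟨n, rfl⟩ : ∃ n : ℕ, z = -n := ⟨(-z).toNat, by omega⟩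
  rw [coeff_aeval_tLS_neg, coeff_eq_zero_of_natDegree_lt (by omega)]

def polyPartPoly (f : LaurentSeries K) : K[X] :=
  ∑ j ∈ Finset.range ((-f.order).toNat + 1), monomial j (f.coeff (-j))

lemma coeff_polyPartPoly (f : LaurentSeries K) (n : ℕ) :
    (polyPartPoly f).coeff n = f.coeff (-n) := by
  rw [polyPartPoly, finsetSum_coeff]
  by_cases hn : n < (-f.order).toNat + 1
  · rw [Finset.sum_eq_single n (fun j _ hj => coeff_monomial_of_ne _ hj.symm) (fun h => absurd
      (Finset.mem_range.mpr hn) h), coeff_monomial_same]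
  · rw [HahnSeries.coeff_eq_zero_of_lt_order (by omega)]
    exact Finset.sum_eq_zero fun j hj => coeff_monomial_of_ne _ (by simp at hj; omega)

lemma coeff_polyPart (f : LaurentSeries K) (z : ℤ) :
    (polyPart f).coeff z = if z ≤ 0 then f.coeff z else 0 := rfl

lemma aeval_polyPartPoly (f : LaurentSeries K) : aeval (tLS K) (polyPartPoly f) = polyPart f := by
  ext z
  rw [coeff_polyPart]
  split_ifs with hz
  · obtain ⟨n, rfl⟩ : ∃ n : ℕ, z = -n := ⟨(-z).toNat, by omega⟩
    rw [coeff_aeval_tLS_neg, coeff_polyPartPoly]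
  · exact coeff_aeval_tLS_of_pos _ (by omega)

lemma fracPart_eq_sub (f : LaurentSeries K) :
    fracPart f = f - aeval (tLS K) (polyPartPoly f) := by
  rw [fracPart, aeval_polyPartPoly]

lemma coeff_fracPart (f : LaurentSeries K) (z : ℤ) :
    (fracPart f).coeff z = if z ≤ 0 then 0 else f.coeff z := by
  rw [fracPart, HahnSeries.coeff_sub, coeff_polyPart]
  split_ifs <;> simp

lemma fracPart_add_aeval_tLS (f : LaurentSeries K) (q : K[X]) :
    fracPart (f + aeval (tLS K) q) = fracPart f := by
  ext z
  rw [coeff_fracPart, coeff_fracPart, HahnSeries.coeff_add]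
  split_ifs with hz
  · rfl
  · rw [coeff_aeval_tLS_of_pos _ (by omega), add_zero]

lemma one_le_order_fracPart {f : LaurentSeries K} (hf : fracPart f ≠ 0) : 1 ≤ (fracPart f).order :=
  (HahnSeries.le_order_iff_forall hf).mpr fun z hz => by rw [coeff_fracPart, if_pos (by omega)]

lemma order_inv_eq_neg {f : LaurentSeries K} (hf : f ≠ 0) : f⁻¹.order = -f.order := by
  have h := HahnSeries.order_mul hf (inv_ne_zero hf)
  rw [mul_inv_cancel₀ hf, HahnSeries.order_one] at h
  omega

lemma natDegree_polyPartPoly {f : LaurentSeries K} (hf : f ≠ 0) (hord : f.order ≤ 0) :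
    ((polyPartPoly f).natDegree : ℤ) = -f.order := by
  have hlead : (polyPartPoly f).coeff (-f.order).toNat ≠ 0 := by
    rw [coeff_polyPartPoly, Int.toNat_of_nonneg (by omega), neg_neg]
    exact mt HahnSeries.coeff_order_eq_zero.mp hf
  rw [natDegree_eq_of_le_of_coeff_ne_zero (natDegree_le_iff_coeff_eq_zero.mpr fun n hn => ?_) hlead]
  · omega
  · rw [coeff_polyPartPoly, HahnSeries.coeff_eq_zero_of_lt_order (by omega)]

section Rationality

open scoped RatFunc

lemma isRatLS_iff {f : LaurentSeries K} :
    IsRatLS f ↔ f ∈ (algebraMap (RatFunc K) (LaurentSeries K)).fieldRange :=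
  RingHom.mem_fieldRange.symm

lemma tLS_eq_algebraMap : tLS K = algebraMap (RatFunc K) (LaurentSeries K) RatFunc.X⁻¹ := by
  rw [map_inv₀, RatFunc.coe_X, eq_comm]
  refine inv_eq_of_mul_eq_one_left ?_
  rw [tLS, HahnSeries.single_mul_single, one_mul, neg_add_cancel, HahnSeries.single_zero_one]

lemma isRatLS_aeval_tLS (q : K[X]) : IsRatLS (aeval (tLS K) q) := by
  rw [isRatLS_iff]
  induction q using Polynomial.induction_on' with
  | add p q hp hq => rw [map_add]; exact add_mem hp hq
  | monomial n c =>
    refine ⟨((C c : K[X]) : RatFunc K) * RatFunc.X⁻¹ ^ n, ?_⟩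
    rw [map_mul, ← RatFunc.coe_coe, coe_C, map_pow, ← tLS_eq_algebraMap, aeval_monomial,
      HahnSeries.algebraMap_apply', PowerSeries.algebraMap_eq]

lemma not_isRatLS_fracPart_tLS_pow_mul {f : LaurentSeries K} (hf : ¬ IsRatLS f) (k : ℕ) :
    ¬ IsRatLS (fracPart (tLS K ^ k * f)) := by
  have ht : tLS K ^ k ≠ 0 := pow_ne_zero _ (HahnSeries.single_ne_zero one_ne_zero)
  have hf' : f = (aeval (tLS K) (X ^ k : K[X]))⁻¹ *
      (aeval (tLS K) (polyPartPoly (tLS K ^ k * f)) + fracPart (tLS K ^ k * f)) := by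
    rw [fracPart_eq_sub, add_sub_cancel, aeval_X_pow, inv_mul_cancel_left₀ ht]
  refine fun h => hf ?_
  rw [hf', isRatLS_iff]
  exact mul_mem (inv_mem (isRatLS_iff.mp (isRatLS_aeval_tLS _)))
    (add_mem (isRatLS_iff.mp (isRatLS_aeval_tLS _)) (isRatLS_iff.mp h))

end Rationality

section ContinuedFraction

variable {f : LaurentSeries K}

def cfPoly (f : LaurentSeries K) (i : ℕ) : K[X] := polyPartPoly (cfQuot f i)

lemma aeval_cfPoly (f : LaurentSeries K) (i : ℕ) : aeval (tLS K) (cfPoly f i) = cfPQ f i :=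
  aeval_polyPartPoly _

lemma cfQuot_succ (f : LaurentSeries K) (i : ℕ) :
    cfQuot f (i + 1) = (fracPart (cfQuot f i))⁻¹ := rfl

lemma cfQuot_eq_add_inv (f : LaurentSeries K) (i : ℕ) :
    cfQuot f i = aeval (tLS K) (cfPoly f i) + (cfQuot f (i + 1))⁻¹ := by
  rw [cfQuot_succ, inv_inv, fracPart_eq_sub, cfPoly, add_sub_cancel]

lemma not_isRatLS_cfQuot (hf : ¬ IsRatLS f) (i : ℕ) : ¬ IsRatLS (cfQuot f i) := by
  induction i with
  | zero => exact hf
  | succ i ih =>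
    rw [isRatLS_iff] at ih ⊢
    exact fun h => ih (cfQuot_eq_add_inv f i ▸
      add_mem (isRatLS_iff.mp (isRatLS_aeval_tLS _)) (inv_mem h))

lemma cfQuot_ne_zero (hf : ¬ IsRatLS f) (i : ℕ) : cfQuot f i ≠ 0 := by
  intro h
  exact not_isRatLS_cfQuot hf i (isRatLS_iff.mpr (h ▸ zero_mem _))

lemma fracPart_cfQuot_ne_zero (hf : ¬ IsRatLS f) (i : ℕ) : fracPart (cfQuot f i) ≠ 0 := by
  intro h
  exact cfQuot_ne_zero hf (i + 1) (by rw [cfQuot_succ, h, inv_zero])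

lemma order_cfQuot_succ_neg (hf : ¬ IsRatLS f) (i : ℕ) : (cfQuot f (i + 1)).order < 0 := by
  rw [cfQuot_succ, order_inv_eq_neg (fracPart_cfQuot_ne_zero hf i)]
  have := one_le_order_fracPart (fracPart_cfQuot_ne_zero hf i)
  omega

lemma natDegree_cfPoly_succ (hf : ¬ IsRatLS f) (i : ℕ) :
    ((cfPoly f (i + 1)).natDegree : ℤ) = -(cfQuot f (i + 1)).order :=
  natDegree_polyPartPoly (cfQuot_ne_zero hf _) (order_cfQuot_succ_neg hf i).le

lemma natDegree_cfPoly_succ_pos (hf : ¬ IsRatLS f) (i : ℕ) : 0 < (cfPoly f (i + 1)).natDegree := by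
  have := natDegree_cfPoly_succ hf i
  have := order_cfQuot_succ_neg hf i
  omega

lemma degZ_cfPQ_succ (hf : ¬ IsRatLS f) (i : ℕ) :
    degZ (cfPQ f (i + 1)) = (cfPoly f (i + 1)).natDegree := by
  rw [← aeval_cfPoly, degZ,
    order_aeval_tLS (ne_zero_of_natDegree_gt (natDegree_cfPoly_succ_pos hf i)), neg_neg]

/-- The convergents `p_j / q_j` carry an index shift: `cfDen f (j + 1) = q_j`,
`cfNum f (j + 1) = p_j`, and index `0` holds `q_{-1} = 0`, `p_{-1} = 1`. -/
def cfDen (f : LaurentSeries K) : ℕ → K[X]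
  | 0 => 0
  | 1 => 1
  | j + 2 => cfPoly f (j + 1) * cfDen f (j + 1) + cfDen f j

def cfNum (f : LaurentSeries K) : ℕ → K[X]
  | 0 => 1
  | 1 => cfPoly f 0
  | j + 2 => cfPoly f (j + 1) * cfNum f (j + 1) + cfNum f j

lemma cfNum_mul_cfDen_sub (f : LaurentSeries K) (j : ℕ) :
    cfNum f (j + 1) * cfDen f j - cfNum f j * cfDen f (j + 1) = (-1) ^ (j + 1) := by
  induction j with
  | zero => simp [cfNum, cfDen]
  | succ j ih =>
    rw [cfNum, cfDen]
    linear_combination -ih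

lemma isCoprime_cfDen_cfNum (f : LaurentSeries K) (j : ℕ) :
    IsCoprime (cfDen f (j + 1)) (cfNum f (j + 1)) := by
  have hsq : ((-1 : K[X]) ^ (j + 1)) * (-1) ^ (j + 1) = 1 := by
    rw [← mul_pow, neg_one_mul, neg_neg, one_pow]
  exact ⟨-(-1) ^ (j + 1) * cfNum f j, (-1) ^ (j + 1) * cfDen f j, by
    linear_combination (-1) ^ (j + 1) * cfNum_mul_cfDen_sub f j + hsq⟩

lemma natDegree_mul_add_of_le {R : Type*} [Semiring R] [NoZeroDivisors R] {A B C : R[X]}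
    (hA : 0 < A.natDegree) (hB : B ≠ 0) (hC : C.natDegree ≤ B.natDegree) :
    (A * B + C).natDegree = A.natDegree + B.natDegree := by
  have hA0 : A ≠ 0 := ne_zero_of_natDegree_gt hA
  rw [natDegree_add_eq_left_of_natDegree_lt (by rw [natDegree_mul hA0 hB]; omega),
    natDegree_mul hA0 hB]

lemma cfDen_succ_ne_zero_and_natDegree_le (hf : ¬ IsRatLS f) (j : ℕ) :
    cfDen f (j + 1) ≠ 0 ∧ (cfDen f j).natDegree ≤ (cfDen f (j + 1)).natDegree := by
  induction j with
  | zero => simp [cfDen]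
  | succ j ih =>
    have h := natDegree_mul_add_of_le (natDegree_cfPoly_succ_pos hf j) ih.1 ih.2
    have hpos := natDegree_cfPoly_succ_pos hf j
    rw [cfDen]
    exact ⟨fun h0 => by rw [h0, natDegree_zero] at h; omega, by omega⟩

lemma natDegree_cfDen_succ_succ (hf : ¬ IsRatLS f) (j : ℕ) :
    (cfDen f (j + 2)).natDegree = (cfPoly f (j + 1)).natDegree + (cfDen f (j + 1)).natDegree :=
  natDegree_mul_add_of_le (natDegree_cfPoly_succ_pos hf j)
    (cfDen_succ_ne_zero_and_natDegree_le hf j).1 (cfDen_succ_ne_zero_and_natDegree_le hf j).2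

lemma natDegree_cfDen_succ (hf : ¬ IsRatLS f) (j : ℕ) :
    (cfDen f (j + 1)).natDegree = ∑ i ∈ Finset.Icc 1 j, (cfPoly f i).natDegree := by
  induction j with
  | zero => simp [cfDen]
  | succ j ih =>
    rw [natDegree_cfDen_succ_succ hf, ih, Finset.sum_Icc_succ_top (by omega), add_comm]

lemma strictMono_natDegree_cfDen (hf : ¬ IsRatLS f) :
    StrictMono fun j => (cfDen f (j + 1)).natDegree :=
  strictMono_nat_of_lt_succ fun j => by
    have := natDegree_cfPoly_succ_pos hf j
    simp only [natDegree_cfDen_succ_succ hf]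
    omega

lemma exists_sum_degZ_cfPQ_eq_iff (hf : ¬ IsRatLS f) (m : ℕ) :
    (∃ j : ℕ, 1 ≤ j ∧ (m : ℤ) + 1 = ∑ i ∈ Finset.Icc 1 j, degZ (cfPQ f i)) ↔
      ∃ j, (cfDen f (j + 1)).natDegree = m + 1 := by
  have hsum : ∀ j, ∑ i ∈ Finset.Icc 1 j, degZ (cfPQ f i) = (cfDen f (j + 1)).natDegree := by
    intro j
    rw [natDegree_cfDen_succ hf, Nat.cast_sum]
    refine Finset.sum_congr rfl fun i hi => ?_
    obtain ⟨i, rfl⟩ : ∃ i', i = i' + 1 := ⟨i - 1, by simp at hi; omega⟩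
    exact degZ_cfPQ_succ hf i
  simp only [hsum]
  constructor
  · rintro ⟨j, -, hj⟩
    exact ⟨j, by omega⟩
  · rintro ⟨j, hj⟩
    refine ⟨j, Nat.one_le_iff_ne_zero.mpr fun h0 => ?_, by omega⟩
    simp [h0, cfDen] at hj

def cfRem (f : LaurentSeries K) (j : ℕ) : LaurentSeries K :=
  f * aeval (tLS K) (cfDen f j) - aeval (tLS K) (cfNum f j)

lemma cfRem_succ_succ (f : LaurentSeries K) (j : ℕ) :
    cfRem f (j + 2) = aeval (tLS K) (cfPoly f (j + 1)) * cfRem f (j + 1) + cfRem f j := by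
  simp only [cfRem, cfDen, cfNum, map_add, map_mul]
  ring

lemma cfRem_succ_mul_cfQuot_succ (hf : ¬ IsRatLS f) (j : ℕ) :
    cfRem f (j + 1) * cfQuot f (j + 1) = -cfRem f j := by
  induction j with
  | zero =>
    have h0 : cfRem f 0 = -1 := by simp [cfRem, cfDen, cfNum]
    have h1 : cfRem f 1 = fracPart (cfQuot f 0) := by
      simp [cfRem, cfDen, cfNum, fracPart_eq_sub, cfPoly, cfQuot]
    rw [h0, h1, cfQuot_succ, mul_inv_cancel₀ (fracPart_cfQuot_ne_zero hf 0), neg_neg]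
  | succ j ih =>
    rw [cfRem_succ_succ]
    linear_combination cfQuot f (j + 2) * ih
      - cfRem f (j + 1) * cfQuot f (j + 2) * cfQuot_eq_add_inv f (j + 1)
      - cfRem f (j + 1) * mul_inv_cancel₀ (cfQuot_ne_zero hf (j + 2))

lemma order_cfRem (hf : ¬ IsRatLS f) (j : ℕ) :
    cfRem f j ≠ 0 ∧ (cfRem f j).order = (cfDen f (j + 1)).natDegree := by
  induction j with
  | zero =>
    have h0 : cfRem f 0 = -1 := by simp [cfRem, cfDen, cfNum]
    simp [h0, cfDen]
  | succ j ih =>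
    have h := cfRem_succ_mul_cfQuot_succ hf j
    have hne : cfRem f (j + 1) ≠ 0 := fun h0 =>
      ih.1 (by rw [h0, zero_mul] at h; exact neg_eq_zero.mp h.symm)
    refine ⟨hne, ?_⟩
    have hord := congrArg HahnSeries.order h
    rw [HahnSeries.order_mul hne (cfQuot_ne_zero hf _), HahnSeries.order_neg, ih.2] at hord
    rw [natDegree_cfDen_succ_succ hf, Nat.cast_add, natDegree_cfPoly_succ hf]
    omega

lemma coeff_cfRem_eq_zero (hf : ¬ IsRatLS f) {j : ℕ} {z : ℤ}
    (hz : z < (cfDen f (j + 1)).natDegree) : (cfRem f j).coeff z = 0 :=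
  HahnSeries.coeff_eq_zero_of_lt_order ((order_cfRem hf j).2 ▸ hz)

/-- Best approximation. Otherwise both `q (q_j Θ - p_j)` and `q_j ⟨qΘ⟩` have no terms of
non-negative degree, hence neither has their difference `q_j p - p_j q ∈ K[t]`, which therefore
vanishes; as `q_j` and `p_j` are coprime, `q_j ∣ q`. -/
theorem natDegree_cfDen_le_of_coeff_fracPart_eq_zero (hf : ¬ IsRatLS f) (j : ℕ) {q : K[X]}
    (hq : q ≠ 0)
    (h : ∀ z ≤ ((cfDen f (j + 1)).natDegree : ℤ), (fracPart (f * aeval (tLS K) q)).coeff z = 0) :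
    (cfDen f (j + 1)).natDegree ≤ q.natDegree := by
  by_contra! hlt
  have hmono : (cfDen f (j + 1)).natDegree < (cfDen f (j + 1 + 1)).natDegree :=
    strictMono_natDegree_cfDen hf (Nat.lt_succ_self j)
  set p := polyPartPoly (f * aeval (tLS K) q)
  have hE : aeval (tLS K) (cfDen f (j + 1) * p - cfNum f (j + 1) * q) =
      cfRem f (j + 1) * aeval (tLS K) q -
        fracPart (f * aeval (tLS K) q) * aeval (tLS K) (cfDen f (j + 1)) := by
    simp only [fracPart_eq_sub, cfRem, map_sub, map_mul, p]
    ring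
  have hE0 : cfDen f (j + 1) * p - cfNum f (j + 1) * q = 0 := by
    ext n
    rw [← coeff_aeval_tLS_neg, hE, HahnSeries.coeff_sub, coeff_zero,
      coeff_mul_aeval_tLS_eq_zero (fun z hz => coeff_cfRem_eq_zero hf (j := j + 1) (by omega)) q
        (N := (cfDen f (j + 1 + 1)).natDegree - 1) (by omega),
      coeff_mul_aeval_tLS_eq_zero h _ (by omega), sub_zero]
  have hdvd : cfDen f (j + 1) ∣ q :=
    (isCoprime_cfDen_cfNum f j).dvd_of_dvd_mul_left ⟨p, (sub_eq_zero.mp hE0).symm⟩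
  exact absurd (natDegree_le_of_dvd hdvd hq) (by omega)

theorem exists_coeff_fracPart_eq_zero_iff (hf : ¬ IsRatLS f) (m : ℕ) :
    (∃ q : K[X], q ≠ 0 ∧ q.natDegree ≤ m ∧
        ∀ z ≤ (m : ℤ) + 1, (fracPart (f * aeval (tLS K) q)).coeff z = 0) ↔
      ∀ j, (cfDen f (j + 1)).natDegree ≠ m + 1 := by
  constructor
  · rintro ⟨q, hq, hqm, hz⟩ j hj
    have := natDegree_cfDen_le_of_coeff_fracPart_eq_zero hf j hq (by rw [hj]; exact_mod_cast hz)
    omega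
  · intro hne
    have hmono := strictMono_natDegree_cfDen hf
    obtain ⟨J, hJm, hJ⟩ := hmono.exists_between_of_tendsto_atTop hmono.tendsto_atTop
      (x := m + 1) (by simp [cfDen])
    have hJ' : m + 1 < (cfDen f (J + 1 + 1)).natDegree := lt_of_le_of_ne hJ (hne (J + 1)).symm
    refine ⟨cfDen f (J + 1), (cfDen_succ_ne_zero_and_natDegree_le hf J).1, by omega, fun z hz => ?_⟩
    have hsplit : f * aeval (tLS K) (cfDen f (J + 1)) =
        cfRem f (J + 1) + aeval (tLS K) (cfNum f (J + 1)) := by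
      rw [cfRem, sub_add_cancel]
    rw [hsplit, fracPart_add_aeval_tLS, coeff_fracPart]
    split_ifs
    · rfl
    · exact coeff_cfRem_eq_zero hf (by omega)

end ContinuedFraction

def hankel (c : ℕ → K) (m : ℕ) : Matrix (Fin (m + 1)) (Fin (m + 1)) K :=
  Matrix.of fun i j => c (i + j)

lemma hankel_det_eq_zero_iff (c : ℕ → K) (m : ℕ) :
    (hankel c m).det = 0 ↔ ∃ q : K[X], q ≠ 0 ∧ q.natDegree ≤ m ∧
      ∀ n ≤ m, ∑ j ∈ Finset.range (m + 1), q.coeff j * c (n + j) = 0 := by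
  let e := degreeLTEquiv K (m + 1)
  have hmem : ∀ q : K[X], q ∈ degreeLT K (m + 1) ↔ q.natDegree ≤ m := fun q => by
    rw [degreeLT_succ_eq_degreeLE, mem_degreeLE, natDegree_le_iff_degree_le]
  have hrow : ∀ (q : degreeLT K (m + 1)) (n : Fin (m + 1)),
      (hankel c m).mulVec (e q) n = ∑ j ∈ Finset.range (m + 1), (q : K[X]).coeff j * c (n + j) := by
    intro q n
    rw [← Fin.sum_univ_eq_sum_range (fun j => (q : K[X]).coeff j * c (n + j))]
    simp only [Matrix.mulVec, dotProduct, hankel, Matrix.of_apply]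
    exact Finset.sum_congr rfl fun j _ => mul_comm _ _
  rw [← Matrix.exists_mulVec_eq_zero_iff]
  constructor
  · rintro ⟨v, hv0, hv⟩
    obtain ⟨q, rfl⟩ := e.surjective v
    refine ⟨q, fun h => hv0 (by rw [Submodule.coe_eq_zero.mp h, map_zero]), (hmem q).mp q.2,
      fun n hn => ?_⟩
    rw [← hrow q ⟨n, by omega⟩, hv, Pi.zero_apply]
  · rintro ⟨q, hq0, hqm, hq⟩
    refine ⟨e ⟨q, (hmem q).mpr hqm⟩, fun h => hq0 (congrArg Subtype.val (e.map_eq_zero_iff.mp h)),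
      funext fun n => ?_⟩
    rw [hrow, Pi.zero_apply]
    exact hq n (by omega)

lemma wallEntry_extendSeq_ne_zero_iff (S : ℕ → K) (m k : ℕ) :
    wallEntry (extendSeq S) m ((m : ℤ) + k) ≠ 0 ↔ (hankel (fun i => S (k + i)) m).det ≠ 0 := by
  have hrev : wallEntry (extendSeq S) m ((m : ℤ) + k) =
      ((hankel (fun i => S (k + i)) m).submatrix Fin.revPerm id).det := by
    rw [wallEntry]
    congr 1
    ext i j
    have hi := i.isLt
    simp only [Matrix.of_apply, Matrix.submatrix_apply, hankel, id, Fin.revPerm_apply, Fin.val_rev,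
      extendSeq]
    rw [if_pos (by omega)]
    congr 1
    omega
  rw [hrev, Matrix.det_permute]
  rcases Int.units_eq_one_or (Equiv.Perm.sign (Fin.revPerm : Equiv.Perm (Fin (m + 1))))
    with hs | hs <;> simp [hs]

lemma forall_coeff_fracPart_mul_eq_zero_iff {g : LaurentSeries K} {c : ℕ → K}
    (hc : ∀ n : ℕ, g.coeff (n + 1) = c n) {q : K[X]} {m : ℕ} (hq : q.natDegree ≤ m) :
    (∀ z ≤ (m : ℤ) + 1, (fracPart (g * aeval (tLS K) q)).coeff z = 0) ↔
      ∀ n ≤ m, ∑ j ∈ Finset.range (m + 1), q.coeff j * c (n + j) = 0 := by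
  have hcoeff : ∀ n : ℕ, (fracPart (g * aeval (tLS K) q)).coeff (n + 1) =
      ∑ j ∈ Finset.range (m + 1), q.coeff j * c (n + j) := fun n => by
    rw [coeff_fracPart, if_neg (by omega), coeff_mul_aeval_tLS g (Nat.lt_succ_of_le hq)]
    refine Finset.sum_congr rfl fun j _ => ?_
    rw [← hc, Nat.cast_add, add_right_comm]
  constructor
  · intro h n hn
    rw [← hcoeff, h _ (by omega)]
  · intro h z hz
    by_cases hz0 : z ≤ 0
    · rw [coeff_fracPart, if_pos hz0]
    · obtain ⟨n, rfl⟩ : ∃ n : ℕ, z = n + 1 := ⟨(z - 1).toNat, by omega⟩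
      rw [hcoeff, h n (by omega)]

lemma coeff_fracPart_tLS_pow_mul_seriesOf (S : ℕ → K) (k n : ℕ) :
    (fracPart (tLS K ^ k * seriesOf S)).coeff (n + 1) = S (k + n) := by
  rw [coeff_fracPart, if_neg (by omega), seriesOf, tLS_pow, ← mul_assoc,
    HahnSeries.single_mul_single, mul_one, show (n : ℤ) + 1 = ((n + k : ℕ) : ℤ) + (-k + 1) by push_cast; ring,
    HahnSeries.coeff_single_mul_add, one_mul, HahnSeries.ofPowerSeries_apply_coeff,
    PowerSeries.coeff_mk, add_comm]

theorem wall_diag_eq_cf_general {K : Type} [Field K] (S : ℕ → K)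
    (hirr : ¬ IsRatLS (seriesOf S)) (k : ℕ) (m : ℕ) :
    wallEntry (extendSeq S) m ((m : ℤ) + k) ≠ 0 ↔
      ∃ j : ℕ, 1 ≤ j ∧
        (m : ℤ) + 1 =
          ∑ i ∈ Finset.Icc 1 j, degZ (cfPQ (fracPart (tLS K ^ k * seriesOf S)) i) := by
  have hΘ := not_isRatLS_fracPart_tLS_pow_mul hirr k
  have hsmall := fun (q : K[X]) (hq : q.natDegree ≤ m) =>
    forall_coeff_fracPart_mul_eq_zero_iff (coeff_fracPart_tLS_pow_mul_seriesOf S k) hq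
  have hhankel := (hankel_det_eq_zero_iff (fun i => S (k + i)) m).trans <| (exists_congr fun q =>
    and_congr_right fun _ => and_congr_right fun hq => (hsmall q hq).symm).trans
      (exists_coeff_fracPart_eq_zero_iff hΘ m)
  rw [exists_sum_degZ_cfPQ_eq_iff hΘ, wallEntry_extendSeq_ne_zero_iff, Ne, hhankel, not_forall]
  simp only [not_not]

/-- The entry `W̃[m, k]` on row `m` of the `k`-th diagonal of the number
wall of `S` is nonzero iff `m + 1` is a partial sum `∑_{i=1}^{j} deg A_i^{[Θ·t^k]}` of the
degrees of the partial quotients of `⟨t^k Θ⟩`, where `Θ = t⁻¹ ∑ s_i t^{-i}`. -/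
theorem wall_diag_eq_cf {K : Type} [Field K] [Fintype K] (S : ℕ → K)
    (hirr : ¬ IsRatLS (seriesOf S)) (k : ℕ) (m : ℕ) :
    wallEntry (extendSeq S) m ((m : ℤ) + k) ≠ 0 ↔
      ∃ j : ℕ, 1 ≤ j ∧
        (m : ℤ) + 1 =
          ∑ i ∈ Finset.Icc 1 j, degZ (cfPQ (fracPart (tLS K ^ k * seriesOf S)) i) :=
  wall_diag_eq_cf_general S hirr k m

end EscapeOfMass
end
end

section
/- For any odd prime p, the Laurent series Θ_p(t) ∈ F_p((t^{-1})) is a quadratic irrational: Θ_p(t) ∉ F_p(t), and (t·Θ_p(t))^2 · (1 + t^{-2}) = 1, so that Θ_p(t) is a root of the quadratic polynomial (t^2 + 1)·X^2 − 1 over F_p[t]. -/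
open scoped Classical
open Filter Polynomial

noncomputable section

namespace EscapeOfMass

variable {K : Type*} [Field K]

/-!
With `X = t⁻¹`, put `F = ∑ cᵢ Xⁱ`, so that `Θ_p = X F`. The digit recursion defining `cᵢ` says
`F = (1 + X²)^((p-1)/2) · F(X^p)`, and `F(X^p) = F^p` in characteristic `p`. Hence
`H = (1 + X²) F²` satisfies `H^p = H`, i.e. `H(X^p) = H`; comparing orders, `H - H(0)` vanishes,
so `H = 1`, which is `(t Θ_p)² (1 + t⁻²) = 1`. Irrationality: `Θ_p² = 1 / (t² + 1)` would make
`t² + 1` a square in `F_p(t)`, hence (`F_p[t]` being integrally closed) in `F_p[t]`, which is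
impossible for a squarefree non-unit.
-/

theorem _root_.ZMod.expand_card_powerSeries {p : ℕ} [Fact p.Prime] (f : PowerSeries (ZMod p)) :
    PowerSeries.expand p (Fact.out : p.Prime).ne_zero f = f ^ p := by
  have h := MvPowerSeries.map_frobenius_expand (R := ZMod p) p (Fact.out : p.Prime).ne_zero (f := f)
  rw [ZMod.frobenius_zmod, MvPowerSeries.map_id] at h
  exact h

theorem _root_.PowerSeries.eq_C_of_expand_eq_self {R : Type*} [CommRing R] {p : ℕ} (hp : p ≠ 0)
    (hp1 : p ≠ 1) {φ : PowerSeries R} (h : PowerSeries.expand p hp φ = φ) :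
    φ = PowerSeries.C (PowerSeries.constantCoeff φ) := by
  set D := φ - PowerSeries.C (PowerSeries.constantCoeff φ)
  have hD0 : D.order ≠ 0 := by
    simp [D, PowerSeries.order_ne_zero_iff_constCoeff_eq_zero]
  have hord : D.order = p • D.order := by
    rw [← PowerSeries.order_expand p hp D]
    simp only [D, map_sub, PowerSeries.expand_C, h]
  suffices D.order = ⊤ by rwa [PowerSeries.order_eq_top, sub_eq_zero] at this
  induction h' : D.order with
  | top => rfl
  | coe m =>
    rw [h', nsmul_eq_mul] at hord
    rw [h'] at hD0
    norm_cast at hord hD0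
    exact absurd ((mul_eq_right₀ hD0).mp hord.symm) hp1

theorem _root_.PowerSeries.coeff_coe_mul_expand {R : Type*} [CommRing R] {p : ℕ} (hp : p ≠ 0)
    {P : Polynomial R} (hP : P.natDegree < p) (G : PowerSeries R) (n : ℕ) :
    PowerSeries.coeff n ((P : PowerSeries R) * PowerSeries.expand p hp G) =
      P.coeff (n % p) * PowerSeries.coeff (n / p) G := by
  rw [PowerSeries.coeff_mul, Finset.sum_eq_single_of_mem (n % p, p * (n / p))
    (by simp [Nat.mod_add_div]), Polynomial.coeff_coe, PowerSeries.coeff_expand_mul]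
  rintro ⟨i, j⟩ hij hne
  rw [Finset.HasAntidiagonal.mem_antidiagonal] at hij
  rw [Polynomial.coeff_coe, PowerSeries.coeff_expand]
  split_ifs with hj
  · obtain ⟨c, rfl⟩ := hj
    have hi : p ≤ i := by
      by_contra! hi
      have hmod : n % p = i := by rw [← hij, Nat.add_mul_mod_self_left, Nat.mod_eq_of_lt hi]
      have := Nat.mod_add_div n p
      exact hne (Prod.ext hmod.symm (by simp only; omega))
    rw [Polynomial.coeff_eq_zero_of_natDegree_lt (hP.trans_le hi), zero_mul]
  · rw [mul_zero]

theorem _root_.Polynomial.coeff_X_sq_add_one_pow {R : Type*} [CommSemiring R] (k i : ℕ) :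
    (((Polynomial.X : Polynomial R) ^ 2 + 1) ^ k).coeff i =
      if i % 2 = 0 then (k.choose (i / 2) : R) else 0 := by
  have h : ((Polynomial.X : Polynomial R) ^ 2 + 1) ^ k =
      Polynomial.expand R 2 ((Polynomial.X + 1) ^ k) := by
    rw [map_pow, map_add, Polynomial.expand_X, map_one]
  rw [h, Polynomial.coeff_expand two_pos]
  by_cases hi : i % 2 = 0
  · rw [if_pos (Nat.dvd_of_mod_eq_zero hi), if_pos hi, Polynomial.coeff_X_add_one_pow]
  · rw [if_neg (mt Nat.mod_eq_zero_of_dvd hi), if_neg hi]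

theorem _root_.Polynomial.squarefree_X_sq_add_one {K : Type*} [Field K] (h2 : (2 : K) ≠ 0) :
    Squarefree ((Polynomial.X : Polynomial K) ^ 2 + 1) := by
  have := Polynomial.separable_X_pow_sub_C (n := 2) (-1 : K) (by exact_mod_cast h2) (by simp)
  simpa [sub_eq_add_neg] using this.squarefree

theorem _root_.Polynomial.not_isUnit_X_sq_add_one {K : Type*} [Field K] :
    ¬IsUnit ((Polynomial.X : Polynomial K) ^ 2 + 1) := fun h => by
  have := Polynomial.natDegree_eq_zero_of_isUnit h
  rw [← sub_neg_eq_add, ← Polynomial.C_1, ← Polynomial.C_neg,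
    Polynomial.natDegree_X_pow_sub_C] at this
  exact two_ne_zero this

theorem not_isSquare_algebraMap_of_squarefree {R F : Type*} [CommRing R] [IsIntegrallyClosed R]
    [CommRing F] [Algebra R F] [IsFractionRing R F] {q : R} (hq : Squarefree q)
    (hu : ¬IsUnit q) : ¬IsSquare (algebraMap R F q) := by
  rintro ⟨x, hx⟩
  obtain ⟨y, rfl⟩ := IsIntegrallyClosed.exists_algebraMap_eq_of_isIntegral_pow (R := R) two_pos
    (show IsIntegral R (x ^ 2) by rw [sq, ← hx]; exact isIntegral_algebraMap)
  have hy : q = y * y := IsFractionRing.injective R F (by rw [map_mul]; exact hx)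
  have hyu : IsUnit y := hq y (hy ▸ dvd_rfl)
  exact hu (hy ▸ hyu.mul hyu)

theorem tLS_mul_single_one : tLS K * HahnSeries.single (1 : ℤ) 1 = 1 := by
  rw [tLS, HahnSeries.single_mul_single]
  simp

theorem tLS_sq_add_one_mul_sq (f : LaurentSeries K) :
    (tLS K ^ 2 + 1) * f ^ 2 = (tLS K * f) ^ 2 * (1 + HahnSeries.single (2 : ℤ) 1) := by
  have h2 : HahnSeries.single (2 : ℤ) (1 : K) = HahnSeries.single 1 1 ^ 2 := by
    rw [HahnSeries.single_pow]; norm_num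
  rw [h2]
  linear_combination (-f ^ 2 * (tLS K * HahnSeries.single (1 : ℤ) (1 : K) + 1)) *
    tLS_mul_single_one (K := K)

theorem not_isRatLS_of_tLS_sq_add_one_mul_sq {f : LaurentSeries K} (h2 : (2 : K) ≠ 0)
    (hf : (tLS K ^ 2 + 1) * f ^ 2 = 1) : ¬IsRatLS f := by
  rintro ⟨r, rfl⟩
  have ht : tLS K = ((RatFunc.X⁻¹ : RatFunc K) : LaurentSeries K) := by
    rw [map_inv₀, RatFunc.coe_X, HahnSeries.inv_single, inv_one]; rfl
  have hr : (RatFunc.X⁻¹ ^ 2 + 1) * r ^ 2 = 1 := by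
    apply (show Function.Injective (fun x : RatFunc K => (x : LaurentSeries K)) from
      RingHom.injective _)
    simpa [ht] using hf
  have hr0 : r ≠ 0 := by rintro rfl; simp at hr
  apply not_isSquare_algebraMap_of_squarefree (F := RatFunc K)
    (Polynomial.squarefree_X_sq_add_one h2) Polynomial.not_isUnit_X_sq_add_one
  refine ⟨RatFunc.X / r, ?_⟩
  rw [map_add, map_pow, RatFunc.algebraMap_X, map_one]
  have hX : (RatFunc.X : RatFunc K) ≠ 0 := RatFunc.X_ne_zero
  field_simp at hr ⊢
  linear_combination hr

theorem cantor_eq {p : ℕ} (hp : 1 < p) (n : ℕ) :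
    cantor p n = (if n % p % 2 = 0 then (((p - 1) / 2).choose (n % p / 2) : ZMod p) else 0) *
      cantor p (n / p) := by
  cases n with
  | zero => simp [cantor]
  | succ m =>
    rw [cantor, dif_pos hp]
    rcases Nat.mod_two_eq_zero_or_one ((m + 1) % p) with h | h <;> simp [h]

theorem mk_cantor_eq_mul_expand {p : ℕ} [Fact p.Prime] (hodd : Odd p) :
    PowerSeries.mk (cantor p) = (PowerSeries.X ^ 2 + 1) ^ ((p - 1) / 2) *
      PowerSeries.expand p (Fact.out : p.Prime).ne_zero (PowerSeries.mk (cantor p)) := by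
  have hdeg : (((Polynomial.X : Polynomial (ZMod p)) ^ 2 + 1) ^ ((p - 1) / 2)).natDegree < p := by
    refine (Polynomial.natDegree_pow_le_of_le _ (Polynomial.natDegree_X_pow_add_C.le)).trans_lt ?_
    obtain ⟨m, rfl⟩ := hodd
    omega
  ext n
  have h := PowerSeries.coeff_coe_mul_expand (Fact.out : p.Prime).ne_zero hdeg
    (PowerSeries.mk (cantor p)) n
  push_cast at h
  rw [h, Polynomial.coeff_X_sq_add_one_pow, PowerSeries.coeff_mk, PowerSeries.coeff_mk,
    cantor_eq (Fact.out : p.Prime).one_lt]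

theorem X_sq_add_one_mul_mk_cantor_sq {p : ℕ} [Fact p.Prime] (hodd : Odd p) :
    (PowerSeries.X ^ 2 + 1) * PowerSeries.mk (cantor p) ^ 2 = 1 := by
  have hp : p.Prime := Fact.out
  set F := PowerSeries.mk (cantor p)
  set u : PowerSeries (ZMod p) := PowerSeries.X ^ 2 + 1
  have hFE : F = u ^ ((p - 1) / 2) * F ^ p := by
    rw [← ZMod.expand_card_powerSeries]; exact mk_cantor_eq_mul_expand hodd
  have hp2 : p = 2 * ((p - 1) / 2) + 1 := by obtain ⟨m, rfl⟩ := hodd; omega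
  have hexp : PowerSeries.expand p hp.ne_zero (u * F ^ 2) = u * F ^ 2 := by
    rw [ZMod.expand_card_powerSeries]
    calc (u * F ^ 2) ^ p = u ^ (2 * ((p - 1) / 2) + 1) * F ^ (2 * p) := by
          rw [← hp2, mul_pow, ← pow_mul, mul_comm 2 p]
      _ = u * (u ^ ((p - 1) / 2) * F ^ p) ^ 2 := by ring
      _ = u * F ^ 2 := by rw [← hFE]
  rw [PowerSeries.eq_C_of_expand_eq_self hp.ne_zero hp.one_lt.ne' hexp]
  simp [u, F, cantor]

theorem cantorTilde_sq_mul_eq_one {p : ℕ} [Fact p.Prime] (hodd : Odd p) :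
    cantorTilde p ^ 2 * (1 + HahnSeries.single (2 : ℤ) (1 : ZMod p)) = 1 := by
  have h := congrArg (HahnSeries.ofPowerSeries ℤ (ZMod p)) (X_sq_add_one_mul_mk_cantor_sq hodd)
  simp only [map_mul, map_add, map_pow, map_one, HahnSeries.ofPowerSeries_X, HahnSeries.single_pow,
    one_pow] at h
  rw [cantorTilde, mul_comm, add_comm]
  exact h

theorem tLS_mul_cantorTheta (p : ℕ) [Fact p.Prime] :
    tLS (ZMod p) * cantorTheta p = cantorTilde p := by
  rw [cantorTheta, ← mul_assoc, tLS_mul_single_one, one_mul]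

/-- `Θ_p` is a quadratic irrational: it is not rational, it satisfies
`(t Θ_p)^2 (1 + t^{-2}) = 1`, and it is a root of `(t² + 1) X² − 1` over `F_p[t]`. -/
theorem pCantor_is_quadratic (p : ℕ) [Fact p.Prime] (hodd : Odd p) :
    ¬ IsRatLS (cantorTheta p) ∧
    (tLS (ZMod p) * cantorTheta p) ^ 2 * (1 + HahnSeries.single (2 : ℤ) (1 : ZMod p)) = 1 ∧
    Polynomial.aeval (tLS (ZMod p)) ((Polynomial.X : Polynomial (ZMod p)) ^ 2 + 1) *
        cantorTheta p ^ 2 - 1 = 0 := by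
  have hsq : (tLS (ZMod p) * cantorTheta p) ^ 2 * (1 + HahnSeries.single (2 : ℤ) 1) = 1 := by
    rw [tLS_mul_cantorTheta]
    exact cantorTilde_sq_mul_eq_one hodd
  have hquad : (tLS (ZMod p) ^ 2 + 1) * cantorTheta p ^ 2 = 1 := by
    rw [tLS_sq_add_one_mul_sq, hsq]
  have h2 : (2 : ZMod p) ≠ 0 :=
    Ring.two_ne_zero (by rw [ZMod.ringChar_zmod_n]; rintro rfl; norm_num at hodd)
  refine ⟨not_isRatLS_of_tLS_sq_add_one_mul_sq h2 hquad, hsq, ?_⟩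
  rw [map_add, map_pow, Polynomial.aeval_X, map_one, hquad, sub_self]

end EscapeOfMass
end
end

section
/- For any odd prime p, the Laurent series Θ̃_p(t) := t·Θ_p(t) = Σ_{i=0}^∞ c_i^{(p)} t^{-i} ∈ F_p((t^{-1})) satisfies Θ̃_p(t) = Θ̃_p(t)^p · Σ_{i=0}^{(p−1)/2} binom((p−1)/2, i) t^{-2i}; equivalently, Θ̃_p(t)^{p−1} · (1 + t^{-2})^{(p−1)/2} = 1. -/
open scoped Classical
open Filter Polynomial

noncomputable section

namespace Polynomial

theorem coeff_one_add_X_sq_pow (R : Type*) [CommSemiring R] (d k : ℕ) :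
    ((1 + X ^ 2 : R[X]) ^ d).coeff k = if 2 ∣ k then (d.choose (k / 2) : R) else 0 := by
  have h : (1 + X ^ 2 : R[X]) ^ d = expand R 2 ((1 + X) ^ d) := by simp
  rw [h, coeff_expand two_pos, coeff_one_add_X_pow]

theorem natDegree_one_add_X_sq_pow_lt (R : Type*) [Semiring R] {p : ℕ} (hp : 0 < p) :
    ((1 + X ^ 2 : R[X]) ^ ((p - 1) / 2)).natDegree < p := by
  have h : (1 + X ^ 2 : R[X]).natDegree ≤ 2 := by compute_degree
  have := natDegree_pow_le_of_le ((p - 1) / 2) h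
  omega

end Polynomial

namespace PowerSeries

theorem coeff_polynomial_mul_expand {R : Type*} [CommRing R] {p : ℕ} (hp : p ≠ 0) {P : R[X]}
    (hP : P.natDegree < p) (f : R⟦X⟧) (n : ℕ) :
    coeff n ((P : R⟦X⟧) * expand p hp f) = P.coeff (n % p) * coeff (n / p) f := by
  rw [coeff_mul, Finset.sum_eq_single ⟨n % p, p * (n / p)⟩]
  · rw [Polynomial.coeff_coe, coeff_expand_mul]
  · rintro ⟨i, j⟩ hij hne
    rw [Finset.HasAntidiagonal.mem_antidiagonal] at hij
    by_cases hi : P.natDegree < i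
    · rw [Polynomial.coeff_coe, Polynomial.coeff_eq_zero_of_natDegree_lt hi, zero_mul]
    · have hj : ¬ p ∣ j := by
        rintro ⟨q, rfl⟩
        have hdigits : n % p = i ∧ n / p = q := by
          subst hij
          constructor
          · rw [Nat.add_mul_mod_self_left, Nat.mod_eq_of_lt (by omega)]
          · rw [Nat.add_mul_div_left _ _ (by omega), Nat.div_eq_of_lt (by omega), zero_add]
        obtain ⟨rfl, rfl⟩ := hdigits
        exact hne rfl
      rw [coeff_expand_of_not_dvd p hp f hj, mul_zero]
  · intro h
    exact absurd (Finset.HasAntidiagonal.mem_antidiagonal.mpr (Nat.mod_add_div n p)) h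

theorem expand_eq_pow {p : ℕ} [Fact p.Prime] (f : (ZMod p)⟦X⟧) :
    expand p (NeZero.ne p) f = f ^ p := by
  rw [← MvPowerSeries.map_frobenius_expand p (NeZero.ne p), ZMod.frobenius_zmod,
    MvPowerSeries.map_id]
  rfl

end PowerSeries

theorem HahnSeries.one_add_single_pow {Γ R : Type*} [AddCommMonoid Γ] [PartialOrder Γ]
    [IsOrderedCancelAddMonoid Γ] [CommSemiring R] (a : Γ) (d : ℕ) :
    (1 + single a (1 : R)) ^ d = ∑ i ∈ Finset.range (d + 1), single (i • a) (d.choose i : R) := by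
  rw [add_comm, add_pow]
  refine Finset.sum_congr rfl fun i _ => ?_
  rw [single_pow, one_pow, one_pow, mul_one, ← single_zero_natCast, single_mul_single, add_zero,
    one_mul]

theorem pow_pred_mul_eq_one_of_eq_pow_mul {M : Type*} [CommMonoidWithZero M]
    [IsCancelMulZero M] {x g : M} {p : ℕ} (hx : x ≠ 0) (hp : 0 < p) (h : x = x ^ p * g) :
    x ^ (p - 1) * g = 1 := by
  apply mul_left_cancel₀ hx
  rw [mul_one, ← mul_assoc, ← pow_succ', Nat.sub_add_cancel hp]
  exact h.symm

namespace EscapeOfMass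

open scoped PowerSeries

def cantorPoly (p : ℕ) : (ZMod p)[X] := (1 + X ^ 2) ^ ((p - 1) / 2)

theorem cantor_eq_coeff_cantorPoly_mul {p : ℕ} (hp : 1 < p) (n : ℕ) :
    cantor p n = (cantorPoly p).coeff (n % p) * cantor p (n / p) := by
  rw [cantorPoly, coeff_one_add_X_sq_pow]
  cases n with
  | zero => simp [cantor]
  | succ m =>
    rw [cantor]
    by_cases h : (m + 1) % p % 2 = 1
    · simp [hp, h, Nat.two_dvd_ne_zero.mpr h]
    · simp [hp, h, Nat.two_dvd_ne_zero.not.mpr h]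

theorem mk_cantor_eq_cantorPoly_mul_pow (p : ℕ) [Fact p.Prime] :
    PowerSeries.mk (cantor p) = (cantorPoly p : (ZMod p)⟦X⟧) * PowerSeries.mk (cantor p) ^ p := by
  rw [← PowerSeries.expand_eq_pow]
  ext n
  rw [PowerSeries.coeff_polynomial_mul_expand, PowerSeries.coeff_mk, PowerSeries.coeff_mk,
    cantor_eq_coeff_cantorPoly_mul (Fact.out : p.Prime).one_lt]
  exact natDegree_one_add_X_sq_pow_lt _ (Fact.out : p.Prime).pos

theorem ofPowerSeries_cantorPoly (p : ℕ) :
    HahnSeries.ofPowerSeries ℤ (ZMod p) (cantorPoly p : (ZMod p)⟦X⟧) =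
      (1 + HahnSeries.single (2 : ℤ) 1) ^ ((p - 1) / 2) := by
  simp [cantorPoly, HahnSeries.ofPowerSeries_X_pow]

theorem cantorTilde_ne_zero (p : ℕ) [Nontrivial (ZMod p)] : cantorTilde p ≠ 0 := by
  intro h
  have := congrArg (fun f : LaurentSeries (ZMod p) => f.coeff ((0 : ℕ) : ℤ)) h
  rw [cantorTilde, HahnSeries.ofPowerSeries_apply_coeff] at this
  simp [cantor] at this

theorem pCantor_tilde_functional_equation_general (p : ℕ) [Fact p.Prime] :
    cantorTilde p =
      cantorTilde p ^ p *
        ∑ i ∈ Finset.range ((p - 1) / 2 + 1),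
          HahnSeries.single ((2 * i : ℕ) : ℤ) ((((p - 1) / 2).choose i : ZMod p)) ∧
    cantorTilde p ^ (p - 1) *
        (1 + HahnSeries.single (2 : ℤ) (1 : ZMod p)) ^ ((p - 1) / 2) = 1 := by
  have h : cantorTilde p =
      cantorTilde p ^ p * (1 + HahnSeries.single (2 : ℤ) (1 : ZMod p)) ^ ((p - 1) / 2) := by
    rw [← ofPowerSeries_cantorPoly, cantorTilde, ← map_pow, ← map_mul, mul_comm,
      ← mk_cantor_eq_cantorPoly_mul_pow]
  refine ⟨?_, pow_pred_mul_eq_one_of_eq_pow_mul (cantorTilde_ne_zero p) (Fact.out : p.Prime).pos h⟩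
  simpa [HahnSeries.one_add_single_pow, mul_comm] using h

/-- The series `Θ̃_p = ∑ c_i^{(p)} t^{-i}` satisfies
`Θ̃_p = Θ̃_p^p · ∑_{i=0}^{(p−1)/2} binom((p−1)/2, i) t^{-2i}`, equivalently
`Θ̃_p^{p−1} (1 + t^{-2})^{(p−1)/2} = 1`. -/
theorem pCantor_tilde_functional_equation (p : ℕ) [Fact p.Prime] (hodd : Odd p) :
    cantorTilde p =
      cantorTilde p ^ p *
        ∑ i ∈ Finset.range ((p - 1) / 2 + 1),
          HahnSeries.single ((2 * i : ℕ) : ℤ) ((((p - 1) / 2).choose i : ZMod p)) ∧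
    cantorTilde p ^ (p - 1) *
        (1 + HahnSeries.single (2 : ℤ) (1 : ZMod p)) ^ ((p - 1) / 2) = 1 :=
  pCantor_tilde_functional_equation_general p

end EscapeOfMass
end
end

section
/- Let p be an odd prime. For every k ≥ 1, the p^k × p^k array Φ_p^k(A) contains a p^{k−1} × p^{k−1} square sub-array all of whose entries are the letter 0, but contains no (p^{k−1}+1) × (p^{k−1}+1) square sub-array all of whose entries are the letter 0; the same holds for Φ_p^k(B). -/
namespace EscapeOfMass

/-- The 12-letter alphabet `{A, B, F, 0, E_N, E_E, E_S, E_W, C_NE, C_SE, C_SW, C_NW}`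
used to generate the profile of the number wall of the `p`-Cantor sequence
(`Z` denotes the letter `0`). -/
inductive NWLetter : Type
  | A | B | F | Z | EN | EE | ES | EW | CNE | CSE | CSW | CNW
  deriving DecidableEq, Repr

open NWLetter

/-- The two-dimensional uniform `[p,p]`-morphism `Φ_p`: `Phi p x i j` is the entry in
row `i` and column `j` (for `0 ≤ i, j ≤ p − 1`) of the `p × p` array `Φ_p(x)`. -/
def Phi (p : ℕ) : NWLetter → ℕ → ℕ → NWLetter
  | .A, i, j =>
      if i % 2 = 0 then (if j % 2 = 0 then .A else .Z)
      else (if j % 2 = 0 then .F else .B)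
  | .B, i, j =>
      if i % 2 = 0 then (if j % 2 = 0 then .B else .F)
      else (if j % 2 = 0 then .Z else .A)
  | .Z, _, _ => .Z
  | .F, i, j =>
      if i = 0 then (if j = 0 then .CNW else if j = p - 1 then .CNE else .EN)
      else if i = p - 1 then (if j = 0 then .CSW else if j = p - 1 then .CSE else .ES)
      else if j = 0 then .EW else if j = p - 1 then .EE else .Z
  | .EN, i, _ => if i = 0 then .EN else .Z
  | .EE, _, j => if j = p - 1 then .EE else .Z
  | .ES, i, _ => if i = p - 1 then .ES else .Z
  | .EW, _, j => if j = 0 then .EW else .Z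
  | .CNE, i, j =>
      if i = 0 then (if j = p - 1 then .CNE else .EN)
      else if j = p - 1 then .EE else .Z
  | .CNW, i, j =>
      if i = 0 then (if j = 0 then .CNW else .EN)
      else if j = 0 then .EW else .Z
  | .CSE, i, j =>
      if i = p - 1 then (if j = p - 1 then .CSE else .ES)
      else if j = p - 1 then .EE else .Z
  | .CSW, i, j =>
      if i = p - 1 then (if j = 0 then .CSW else .ES)
      else if j = 0 then .EW else .Z

/-- `PhiIter p k x i j` is the `(i, j)` entry of the `p^k × p^k` array `Φ_p^k(x)`,
obtained by applying `Φ_p` entrywise and assembling the resulting `p × p` blocks. -/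
def PhiIter (p : ℕ) : ℕ → NWLetter → ℕ → ℕ → NWLetter
  | 0, x, _, _ => x
  | k + 1, x, i, j => Phi p (PhiIter p k x (i / p) (j / p)) (i % p) (j % p)

/-- The two-dimensional fixed point `Φ_p^∞(A)`. -/
def PhiInf (p : ℕ) (i j : ℕ) : NWLetter := PhiIter p (i + j + 1) .A i j


/-- `HasZeroSquare p k x s`: the array `Φ_p^k(x)` contains an `s × s` square sub-array
all of whose entries are the letter `0`. -/
def HasZeroSquare (p k : ℕ) (x : NWLetter) (s : ℕ) : Prop :=
  ∃ i j : ℕ, i + s ≤ p ^ k ∧ j + s ≤ p ^ k ∧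
    ∀ a b : ℕ, a < s → b < s → PhiIter p k x (i + a) (j + b) = .Z

lemma phi_Z (p : ℕ) (i j : ℕ) : Phi p .Z i j = .Z := rfl

lemma phiIter_one (p : ℕ) (x : NWLetter) (a b : ℕ) :
    PhiIter p 1 x a b = Phi p x (a % p) (b % p) := rfl

lemma phiIter_Z (p : ℕ) : ∀ n i j, PhiIter p n .Z i j = .Z := by
  intro n
  induction n with
  | zero => intro i j; rfl
  | succ n ih =>
    intro i j
    show Phi p (PhiIter p n .Z (i / p) (j / p)) (i % p) (j % p) = .Z
    rw [ih, phi_Z]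

lemma phiIter_comp (p m : ℕ) : ∀ n (x : NWLetter) (i j : ℕ),
    PhiIter p (m + n) x i j =
      PhiIter p n (PhiIter p m x (i / p ^ n) (j / p ^ n)) (i % p ^ n) (j % p ^ n) := by
  intro n
  induction n with
  | zero => intro x i j; simp [PhiIter]
  | succ n ih =>
    intro x i j
    have hpp : p ^ (n + 1) = p * p ^ n := by rw [pow_succ]; ring
    show Phi p (PhiIter p (m + n) x (i / p) (j / p)) (i % p) (j % p) = _
    rw [ih]
    show _ = Phi p (PhiIter p n (PhiIter p m x (i / p ^ (n + 1)) (j / p ^ (n + 1)))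
        (i % p ^ (n + 1) / p) (j % p ^ (n + 1) / p)) (i % p ^ (n + 1) % p) (j % p ^ (n + 1) % p)
    rw [hpp, Nat.mod_mul_right_div_self, Nat.mod_mul_right_div_self,
        Nat.mod_mod_of_dvd i (dvd_mul_right p (p ^ n)),
        Nat.mod_mod_of_dvd j (dvd_mul_right p (p ^ n)),
        Nat.div_div_eq_div_mul, Nat.div_div_eq_div_mul]

lemma phiIter_corner (p : ℕ) (hp2 : 2 ≤ p) (hpo : p % 2 = 1) (x : NWLetter)
    (hself : ∀ u v, u < p → v < p → u % 2 = 0 → v % 2 = 0 → Phi p x u v = x) :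
    ∀ m u v, (u = 0 ∨ u = p ^ m - 1) → (v = 0 ∨ v = p ^ m - 1) → PhiIter p m x u v = x := by
  intro m
  induction m with
  | zero =>
    intro u v hu hv
    have hu0 : u = 0 := by simpa using hu
    have hv0 : v = 0 := by simpa using hv
    subst hu0; subst hv0; rfl
  | succ m ih =>
    intro u v hu hv
    have ha : 1 ≤ p ^ m := Nat.one_le_pow _ _ (by omega)
    have key : ∀ w, (w = 0 ∨ w = p ^ (m + 1) - 1) →
        (w / p = 0 ∨ w / p = p ^ m - 1) ∧ w % p < p ∧ w % p % 2 = 0 := by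
      intro w hw
      rcases hw with rfl | rfl
      · refine ⟨Or.inl (Nat.zero_div p), ?_, ?_⟩
        · rw [Nat.zero_mod]; omega
        · rw [Nat.zero_mod]
      · have hA : p ≤ p ^ m * p := Nat.le_mul_of_pos_left p (by omega)
        have h2 : (p ^ m - 1) * p = p ^ m * p - p := by rw [Nat.sub_mul, one_mul]
        have h1 : p ^ (m + 1) - 1 = (p - 1) + (p ^ m - 1) * p := by
          rw [pow_succ]; omega
        rw [h1, Nat.add_mul_div_right _ _ (by omega : 0 < p),
            Nat.add_mul_mod_self_right, Nat.div_eq_of_lt (by omega),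
            Nat.mod_eq_of_lt (by omega)]
        exact ⟨Or.inr (by omega), by omega, by omega⟩
    obtain ⟨hud, hum, hup⟩ := key u hu
    obtain ⟨hvd, hvm, hvp⟩ := key v hv
    show Phi p (PhiIter p m x (u / p) (v / p)) (u % p) (v % p) = x
    rw [ih (u / p) (v / p) hud hvd, hself _ _ hum hvm hup hvp]

lemma hasZeroSquare_of (p k : ℕ) (hp2 : 2 ≤ p) (hk : 1 ≤ k) (x : NWLetter)
    (i0 j0 : ℕ) (hi0 : i0 < p) (hj0 : j0 < p) (h : Phi p x i0 j0 = .Z) :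
    HasZeroSquare p k x (p ^ (k - 1)) := by
  set q := p ^ (k - 1) with hqdef
  have hq1 : 1 ≤ q := Nat.one_le_pow _ _ (by omega)
  have hpk : p ^ k = q * p := by rw [hqdef, ← pow_succ]; congr 1; omega
  refine ⟨q * i0, q * j0, ?_, ?_, ?_⟩
  · rw [hpk]
    calc q * i0 + q = q * (i0 + 1) := by ring
      _ ≤ q * p := Nat.mul_le_mul_left q (by omega)
  · rw [hpk]
    calc q * j0 + q = q * (j0 + 1) := by ring
      _ ≤ q * p := Nat.mul_le_mul_left q (by omega)
  · intro a b ha hb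
    have hk' : k = 1 + (k - 1) := by omega
    rw [hk', phiIter_comp, ← hqdef]
    rw [Nat.mul_add_div (by omega) , Nat.mul_add_div (by omega),
        Nat.mul_add_mod, Nat.mul_add_mod,
        Nat.div_eq_of_lt ha, Nat.div_eq_of_lt hb, Nat.add_zero, Nat.add_zero,
        phiIter_one, Nat.mod_eq_of_lt hi0, Nat.mod_eq_of_lt hj0, h, phiIter_Z]

lemma pick (q : ℕ) (hq1 : 1 ≤ q) (p : ℕ) (hp2 : 2 ≤ p) (i : ℕ)
    (hi : i + q + 1 ≤ q * p) :
    ∃ I, i ≤ I ∧ I ≤ i + q ∧ I / q < p ∧ (I / q) % 2 = 0 ∧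
      (I % q = 0 ∨ I % q = q - 1) := by
  have hdm := Nat.div_add_mod i q
  have hmod : i % q < q := Nat.mod_lt i (by omega)
  have hc : p * q = q * p := mul_comm p q
  have hr : i / q < p - 1 := by
    rw [Nat.div_lt_iff_lt_mul (by omega : 0 < q)]
    have h2 : (p - 1) * q = p * q - q := by rw [Nat.sub_mul, one_mul]
    omega
  set r := i / q with hrdef
  have hc2 : q * r = r * q := mul_comm q r
  rcases Nat.even_or_odd r with hre | hro
  · -- use I = r*q + (q-1)
    refine ⟨(q - 1) + r * q, ?_, ?_, ?_, ?_, ?_⟩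
    · omega
    · omega
    · rw [Nat.add_mul_div_right _ _ (by omega : 0 < q), Nat.div_eq_of_lt (by omega)]
      omega
    · rw [Nat.add_mul_div_right _ _ (by omega : 0 < q), Nat.div_eq_of_lt (by omega)]
      have := Nat.even_iff.mp hre
      omega
    · right
      rw [Nat.add_mul_mod_self_right, Nat.mod_eq_of_lt (by omega)]
  · -- use I = (r+1)*q
    refine ⟨q + r * q, ?_, ?_, ?_, ?_, ?_⟩
    · omega
    · omega
    · rw [Nat.add_mul_div_right _ _ (by omega : 0 < q), Nat.div_self (by omega : 0 < q)]
      omega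
    · rw [Nat.add_mul_div_right _ _ (by omega : 0 < q), Nat.div_self (by omega : 0 < q)]
      have := Nat.odd_iff.mp hro
      omega
    · left
      rw [Nat.add_mul_mod_self_right, Nat.mod_self]

lemma not_hasZeroSquare (p k : ℕ) (hp2 : 2 ≤ p) (hpo : p % 2 = 1) (hk : 1 ≤ k)
    (x : NWLetter) (hxZ : x ≠ .Z)
    (hself : ∀ u v, u < p → v < p → u % 2 = 0 → v % 2 = 0 → Phi p x u v = x) :
    ¬ HasZeroSquare p k x (p ^ (k - 1) + 1) := by
  rintro ⟨i, j, h1, h2, hz⟩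
  set q := p ^ (k - 1) with hqdef
  have hq1 : 1 ≤ q := Nat.one_le_pow _ _ (by omega)
  have hpk : p ^ k = q * p := by rw [hqdef, ← pow_succ]; congr 1; omega
  rw [hpk] at h1 h2
  obtain ⟨I, hI1, hI2, hI3, hI4, hI5⟩ := pick q hq1 p hp2 i (by omega)
  obtain ⟨J, hJ1, hJ2, hJ3, hJ4, hJ5⟩ := pick q hq1 p hp2 j (by omega)
  have hzI : PhiIter p k x I J = .Z := by
    have := hz (I - i) (J - j) (by omega) (by omega)
    rwa [Nat.add_sub_cancel' hI1, Nat.add_sub_cancel' hJ1] at this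
  have hk' : k = 1 + (k - 1) := by omega
  rw [hk', phiIter_comp, ← hqdef, phiIter_one,
      Nat.mod_eq_of_lt hI3, Nat.mod_eq_of_lt hJ3,
      hself _ _ hI3 hJ3 hI4 hJ4,
      phiIter_corner p hp2 hpo x hself (k - 1) _ _ (by rw [← hqdef]; exact hI5)
        (by rw [← hqdef]; exact hJ5)] at hzI
  exact hxZ hzI

/-- For `k ≥ 1`, `Φ_p^k(A)` contains a `p^{k−1} × p^{k−1}` all-zero
square sub-array but no `(p^{k−1}+1) × (p^{k−1}+1)` all-zero square sub-array, and the
same holds for `Φ_p^k(B)`. -/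
theorem phiIter_largest_zero_square (p : ℕ) (hp : p.Prime) (hodd : Odd p)
    (k : ℕ) (hk : 1 ≤ k) :
    HasZeroSquare p k .A (p ^ (k - 1)) ∧ ¬ HasZeroSquare p k .A (p ^ (k - 1) + 1) ∧
    HasZeroSquare p k .B (p ^ (k - 1)) ∧ ¬ HasZeroSquare p k .B (p ^ (k - 1) + 1) := by
  have hp2 := hp.two_le
  have hpo : p % 2 = 1 := Nat.odd_iff.mp hodd
  have hselfA : ∀ u v, u < p → v < p → u % 2 = 0 → v % 2 = 0 → Phi p .A u v = .A := by
    intro u v _ _ hu hv; simp [Phi, hu, hv]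
  have hselfB : ∀ u v, u < p → v < p → u % 2 = 0 → v % 2 = 0 → Phi p .B u v = .B := by
    intro u v _ _ hu hv; simp [Phi, hu, hv]
  exact ⟨hasZeroSquare_of p k hp2 hk .A 0 1 (by omega) (by omega) (by simp [Phi]),
    not_hasZeroSquare p k hp2 hpo hk .A (by simp) hselfA,
    hasZeroSquare_of p k hp2 hk .B 1 0 (by omega) (by omega) (by simp [Phi]),
    not_hasZeroSquare p k hp2 hpo hk .B (by simp) hselfB⟩

end EscapeOfMass
end
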